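/- arXiv:2007.07164 — 5 statements merged into one kernel-verified Lean document; each statement's English description precedes it below -/
import Mathlib

section
/- For any bitstring x of length 2n+1 with exactly n ones (n ≥ 1), there is a unique integer ℓ with 0 ≤ ℓ ≤ 2n such that the first 2n bits of the cyclic left-rotation of x by ℓ positions form a Dyck word. -/
/-- A Dyck word: a binary string (1 = `true`, 0 = `false`) with equally many 1s and 0s such
that every prefix has at least as many 1s as 0s. -/
def IsDyck (w : List Bool) : Prop :=
  w.count false = w.count true ∧ ∀ k, (w.take k).count false ≤ (w.take k).count true

/-!
The cycle lemma. Let `P j` be the excess (#1s − #0s) of the length-`j` prefix of `x ++ x`.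
Since `x` has excess `-1`, `P (j + |x|) = P j - 1`. Dropping its last letter, the rotation by `ℓ`
is a Dyck word iff `P ℓ ≤ P (ℓ + k)` for all `k < |x|`, and by the shift relation this holds
exactly when `ℓ` is the first index at which `P` attains its minimum on `[0, |x|)`.
-/

def excess (w : List Bool) : ℤ := w.count true - w.count false

@[simp] lemma excess_nil : excess [] = 0 := by simp [excess]

lemma excess_append (u v : List Bool) : excess (u ++ v) = excess u + excess v := by
  simp only [excess, List.count_append]; push_cast; ring

lemma excess_singleton_ge (b : Bool) : -1 ≤ excess [b] := by cases b <;> simp [excess]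

lemma excess_rotate (w : List Bool) (ℓ : ℕ) : excess (w.rotate ℓ) = excess w := by
  simp only [excess, (w.rotate_perm ℓ).count_eq]

lemma isDyck_iff_excess (w : List Bool) :
    IsDyck w ↔ excess w = 0 ∧ ∀ k, 0 ≤ excess (w.take k) := by
  simp only [IsDyck, excess, sub_nonneg, sub_eq_zero, Nat.cast_le, Nat.cast_inj, eq_comm]

lemma isDyck_dropLast_iff {y : List Bool} (hy : excess y = -1) :
    IsDyck y.dropLast ↔ ∀ k < y.length, 0 ≤ excess (y.take k) := by
  have hy0 : y ≠ [] := by rintro rfl; simp at hy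
  have hlen : 0 < y.length := List.length_pos_iff.mpr hy0
  have htake : ∀ k, y.dropLast.take k = y.take (min k (y.length - 1)) := by
    intro k; rw [List.dropLast_eq_take, List.take_take]
  rw [isDyck_iff_excess]
  constructor
  · rintro ⟨-, hpre⟩ k hk
    simpa [htake, Nat.min_eq_left (Nat.le_sub_one_of_lt hk)] using hpre k
  · intro hpre
    have hpre' : ∀ k, 0 ≤ excess (y.dropLast.take k) := fun k => by
      rw [htake]; exact hpre _ (by omega)
    have hdrop : 0 ≤ excess y.dropLast := by
      simpa [List.take_of_length_le] using hpre' y.length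
    refine ⟨le_antisymm ?_ hdrop, hpre'⟩
    have hsplit := congrArg excess (List.dropLast_append_getLast hy0)
    rw [excess_append, hy] at hsplit
    linarith [excess_singleton_ge (y.getLast hy0)]

lemma take_rotate_eq_take_drop_append_self {α : Type*} {l : List α} {ℓ k : ℕ}
    (hℓ : ℓ ≤ l.length) (hk : k ≤ l.length) :
    (l.rotate ℓ).take k = ((l ++ l).drop ℓ).take k := by
  rw [List.rotate_eq_drop_append_take hℓ, List.drop_append, Nat.sub_eq_zero_of_le hℓ,
    List.drop_zero, List.take_append, List.take_append, List.take_take, List.length_drop,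
    Nat.min_eq_left (by omega)]

lemma excess_take_rotate {l : List Bool} {ℓ k : ℕ} (hℓ : ℓ ≤ l.length) (hk : k ≤ l.length) :
    excess ((l.rotate ℓ).take k) = excess ((l ++ l).take (ℓ + k)) - excess ((l ++ l).take ℓ) := by
  rw [take_rotate_eq_take_drop_append_self hℓ hk, List.take_add, excess_append]; ring

lemma excess_take_append_self_add_length {l : List Bool} {j : ℕ} (hj : j ≤ l.length) :
    excess ((l ++ l).take (j + l.length)) = excess ((l ++ l).take j) + excess l := by
  rw [add_comm, List.take_add, List.take_left' rfl, List.drop_left' rfl, excess_append,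
    List.take_append, Nat.sub_eq_zero_of_le hj, List.take_zero, List.append_nil]
  ring

lemma exists_least_argmin {β : Type*} [LinearOrder β] (f : ℕ → β) {m : ℕ} (hm : 0 < m) :
    ∃ ℓ < m, (∀ j < m, f ℓ ≤ f j) ∧ ∀ j < ℓ, f ℓ < f j := by
  classical
  have hmin : ∃ ℓ, ℓ < m ∧ ∀ j < m, f ℓ ≤ f j := by
    obtain ⟨ℓ, hℓ, h⟩ := (Finset.range m).exists_min_image f ⟨0, Finset.mem_range.mpr hm⟩
    exact ⟨ℓ, Finset.mem_range.mp hℓ, fun j hj => h j (Finset.mem_range.mpr hj)⟩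
  obtain ⟨hℓm, hℓmin⟩ := Nat.find_spec hmin
  refine ⟨Nat.find hmin, hℓm, hℓmin, fun j hj => ?_⟩
  have hj' : ¬ ∀ i < m, f j ≤ f i := fun h => Nat.find_min hmin hj ⟨hj.trans hℓm, h⟩
  push Not at hj'
  obtain ⟨i, hi, hlt⟩ := hj'
  exact (hℓmin i hi).trans_lt hlt

theorem existsUnique_lt_forall_le_add {P : ℕ → ℤ} {m : ℕ} (hm : 0 < m)
    (hper : ∀ j < m, P (j + m) = P j - 1) :
    ∃! ℓ, ℓ < m ∧ ∀ k < m, P ℓ ≤ P (ℓ + k) := by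
  obtain ⟨ℓ, hℓm, hmin, hfirst⟩ := exists_least_argmin P hm
  have hgood : ∀ k < m, P ℓ ≤ P (ℓ + k) := fun k hk => by
    by_cases hwrap : ℓ + k < m
    · exact hmin _ hwrap
    · obtain ⟨j, hj⟩ : ∃ j, ℓ + k = j + m := ⟨ℓ + k - m, by omega⟩
      have := hfirst j (by omega)
      rw [hj, hper j (by omega)]; omega
  have hnot_two : ∀ a b, a < b → b < m → (∀ k < m, P a ≤ P (a + k)) →
      (∀ k < m, P b ≤ P (b + k)) → False := fun a b hab hbm ha hb => by
    have hab' := ha (b - a) (by omega)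
    have hba := hb (a + m - b) (by omega)
    rw [Nat.add_sub_cancel' hab.le] at hab'
    rw [show b + (a + m - b) = a + m by omega, hper a (by omega)] at hba
    omega
  refine ⟨ℓ, ⟨hℓm, hgood⟩, fun ℓ' ⟨hℓ'm, hℓ'⟩ => ?_⟩
  rcases lt_trichotomy ℓ' ℓ with h | h | h
  · exact (hnot_two ℓ' ℓ h hℓm hℓ' hgood).elim
  · exact h
  · exact (hnot_two ℓ ℓ' h hℓ'm hgood hℓ').elim

theorem existsUnique_rotate_excess_take_nonneg {x : List Bool} (hx : excess x = -1) :
    ∃! ℓ, ℓ < x.length ∧ ∀ k < x.length, 0 ≤ excess ((x.rotate ℓ).take k) := by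
  set P : ℕ → ℤ := fun j => excess ((x ++ x).take j)
  have hper : ∀ j < x.length, P (j + x.length) = P j - 1 := fun j hj => by
    simp only [P, excess_take_append_self_add_length hj.le, hx]; ring
  have hm : 0 < x.length := List.length_pos_iff.mpr (by rintro h; simp [h] at hx)
  refine (existsUnique_congr fun ℓ => and_congr_right fun hℓ => forall₂_congr fun k hk => ?_).mpr
    (existsUnique_lt_forall_le_add hm hper)
  rw [excess_take_rotate hℓ.le hk.le, sub_nonneg]

theorem unique_rotation_dyck_prefix_general (n : ℕ) (x : List Bool)
    (hlen : x.length = 2 * n + 1) (hcount : x.count true = n) :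
    ∃! ℓ : ℕ, ℓ ≤ 2 * n ∧ IsDyck ((x.rotate ℓ).take (2 * n)) := by
  have hx : excess x = -1 := by
    have := x.count_true_add_count_false
    simp only [excess]; omega
  refine (existsUnique_congr fun ℓ => and_congr (by omega) ?_).mpr
    (existsUnique_rotate_excess_take_nonneg hx)
  have hdrop : (x.rotate ℓ).take (2 * n) = (x.rotate ℓ).dropLast := by
    rw [List.dropLast_eq_take, List.length_rotate, hlen, Nat.add_sub_cancel]
  rw [hdrop, isDyck_dropLast_iff (by rwa [excess_rotate]), List.length_rotate]

/-- For any bitstring `x` of length `2n+1` with exactly `n` ones (`n ≥ 1`),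
there is a unique `ℓ` with `0 ≤ ℓ ≤ 2n` such that the first `2n` bits of the cyclic
left-rotation of `x` by `ℓ` positions form a Dyck word. -/
theorem unique_rotation_dyck_prefix (n : ℕ) (hn : 1 ≤ n) (x : List Bool)
    (hlen : x.length = 2 * n + 1) (hcount : x.count true = n) :
    ∃! ℓ : ℕ, ℓ ≤ 2 * n ∧ IsDyck ((x.rotate ℓ).take (2 * n)) :=
  unique_rotation_dyck_prefix_general n x hlen hcount
end

section
/- If 2n+1 is prime, then the n-th Catalan number satisfies C_n ≡ 2·(−1)^n (mod 2n+1). -/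
lemma choose_pred_prime (p : ℕ) (hp : Nat.Prime p) :
    ∀ k, k < p → (((p - 1).choose k : ZMod p)) = (-1) ^ k := by
  intro k
  induction k with
  | zero => simp
  | succ k ih =>
    intro hk
    have hk' : k < p := Nat.lt_of_succ_lt hk
    have hpascal : (p - 1).choose k + (p - 1).choose (k + 1) = p.choose (k + 1) := by
      have h1 : p - 1 + 1 = p := Nat.succ_pred_eq_of_pos hp.pos
      conv_rhs => rw [← h1]
      rw [Nat.choose_succ_succ']
    have hdvd : (p : ℤ) ∣ (p.choose (k + 1) : ℤ) := by
      exact_mod_cast Int.natCast_dvd_natCast.mpr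
        (hp.dvd_choose_self (Nat.succ_ne_zero k) hk)
    have h0 : ((p.choose (k + 1) : ℤ) : ZMod p) = 0 := by
      rcases hdvd with ⟨c, hc⟩
      simp [hc]
    have h0' : ((p.choose (k + 1) : ℕ) : ZMod p) = 0 := by
      exact_mod_cast h0
    have : ((p - 1).choose k : ZMod p) + ((p - 1).choose (k + 1) : ZMod p) = 0 := by
      rw [← Nat.cast_add, hpascal, h0']
    rw [ih hk'] at this
    have : ((p - 1).choose (k + 1) : ZMod p) = -(-1 : ZMod p) ^ k := by linear_combination this
    rw [this, pow_succ]
    ring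

/-- If `2n+1` is prime (`n ≥ 1`), then the `n`-th Catalan number
satisfies `C_n ≡ 2·(−1)^n (mod 2n+1)`. -/
theorem catalan_mod_prime (n : ℕ) (hn : 1 ≤ n) (hp : Nat.Prime (2 * n + 1)) :
    (catalan n : ℤ) ≡ 2 * (-1) ^ n [ZMOD (2 * n + 1)] := by
  set p := 2 * n + 1 with hpdef
  have hcast : ((2 * n + 1 : ℕ) : ℤ) = 2 * (n : ℤ) + 1 := by push_cast; ring
  rw [← hcast, ← ZMod.intCast_eq_intCast_iff]
  push_cast
  have hcb : ((n + 1 : ℕ) : ZMod p) * (catalan n : ZMod p) = ((n.centralBinom : ℕ) : ZMod p) := by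
    rw [← Nat.cast_mul, succ_mul_catalan_eq_centralBinom]
  have hchoose : ((n.centralBinom : ℕ) : ZMod p) = (-1) ^ n := by
    have : n.centralBinom = (p - 1).choose n := by
      rw [Nat.centralBinom]
      congr 1
    rw [this]
    exact choose_pred_prime p hp n (by omega)
  have h2 : ((2 : ZMod p) * ((n + 1 : ℕ) : ZMod p)) = 1 := by
    have h : (2 * (n + 1) : ℕ) = p + 1 := by omega
    calc (2 : ZMod p) * ((n + 1 : ℕ) : ZMod p) = ((2 * (n + 1) : ℕ) : ZMod p) := by
          push_cast; ring
      _ = ((p + 1 : ℕ) : ZMod p) := by rw [h]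
      _ = 1 := by push_cast [ZMod.natCast_self]; ring
  calc (catalan n : ZMod p) = (2 * ((n + 1 : ℕ) : ZMod p)) * (catalan n : ZMod p) := by
        rw [h2, one_mul]
    _ = 2 * (((n + 1 : ℕ) : ZMod p) * (catalan n : ZMod p)) := by ring
    _ = 2 * (-1) ^ n := by rw [hcb, hchoose]
end

section
/- For n ≥ 1 and any integer 1 ≤ d ≤ n coprime to 2n+1, define τ_{n,d} to be the string of length 2n+1 obtained by placing the entries of the switch τ_{n,1} = 1^n 0 0^{n-1} 0 (with the (n+1)-st position marked and the last position marked) at positions 1, 1+d, 1+2d, … (mod 2n+1). Then τ_{n,d} is a switch with shift d; that is, the two strings obtained from its base string x (which has n ones) by setting the two marked 0-positions to 1 are cyclic rotations of each other, related by rotation by exactly d positions. -/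
/-- For `n ≥ 1` and `1 ≤ d ≤ n` coprime to `2n+1`, let `τ_{n,d}` be the
string of length `2n+1` (indexed by `ZMod (2n+1)`, entry `true` = 1) obtained by placing
the entries of the switch `τ_{n,1} = 1^n 0 0^{n-1} 0` (whose entry at index `k` is 1 iff
`k < n`, with the index-`n` position overlined and the index-`2n` position underlined) at
the positions `k·d (mod 2n+1)`.  Then `τ_{n,d}` is a switch with shift `d`: its base
string `xd` has `n` ones and has 0s at the two marked positions `n·d` and `2n·d`, and the
two strings `y, y'` obtained from `xd` by setting the marked positions `2n·d` resp. `n·d`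
to 1 are distinct, each with `n+1` ones, and satisfy `y = σ^d(y')`, i.e. `y` is the cyclic
left-rotation of `y'` by exactly `d` positions. -/
theorem tau_nd_is_switch_with_shift (n : ℕ) (hn : 1 ≤ n) (d : ℕ) (hd1 : 1 ≤ d)
    (hdn : d ≤ n) (hcop : Nat.Coprime d (2 * n + 1))
    (xd : ZMod (2 * n + 1) → Bool)
    (hxd : ∀ k : ZMod (2 * n + 1), xd (k * (d : ZMod (2 * n + 1))) = decide (k.val < n)) :
    xd (((2 * n : ℕ) : ZMod (2 * n + 1)) * (d : ZMod (2 * n + 1))) = false ∧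
    xd (((n : ℕ) : ZMod (2 * n + 1)) * (d : ZMod (2 * n + 1))) = false ∧
    (Finset.univ.filter fun j : ZMod (2 * n + 1) => xd j = true).card = n ∧
    Function.update xd (((2 * n : ℕ) : ZMod (2 * n + 1)) * (d : ZMod (2 * n + 1))) true ≠
      Function.update xd (((n : ℕ) : ZMod (2 * n + 1)) * (d : ZMod (2 * n + 1))) true ∧
    (Finset.univ.filter fun j : ZMod (2 * n + 1) =>
      Function.update xd (((2 * n : ℕ) : ZMod (2 * n + 1)) * (d : ZMod (2 * n + 1))) true j
        = true).card = n + 1 ∧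
    (Finset.univ.filter fun j : ZMod (2 * n + 1) =>
      Function.update xd (((n : ℕ) : ZMod (2 * n + 1)) * (d : ZMod (2 * n + 1))) true j
        = true).card = n + 1 ∧
    ∀ j : ZMod (2 * n + 1),
      Function.update xd (((2 * n : ℕ) : ZMod (2 * n + 1)) * (d : ZMod (2 * n + 1))) true j
        = Function.update xd (((n : ℕ) : ZMod (2 * n + 1)) * (d : ZMod (2 * n + 1))) true
            (j + (d : ZMod (2 * n + 1))) := by

  haveI : NeZero (2 * n + 1) := ⟨by omega⟩
  have hval : ∀ m : ℕ, m < 2 * n + 1 → ((m : ZMod (2 * n + 1))).val = m := fun m hm => ZMod.val_cast_of_lt hm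
  have hcastinj : ∀ a b : ℕ, a < 2 * n + 1 → b < 2 * n + 1 → ((a : ZMod (2 * n + 1)) = (b : ZMod (2 * n + 1))) → a = b := by
    intro a b ha hb h
    have := congrArg ZMod.val h
    rwa [hval a ha, hval b hb] at this
  have hdu : IsUnit (d : ZMod (2 * n + 1)) :=
    ⟨ZMod.unitOfCoprime d hcop, ZMod.coe_unitOfCoprime d hcop⟩
  have hcancel : ∀ a b : ZMod (2 * n + 1), a * (d : ZMod (2 * n + 1)) = b * (d : ZMod (2 * n + 1)) → a = b := by
    intro a b h
    apply hdu.mul_left_cancel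
    rwa [mul_comm (d : ZMod (2 * n + 1)) a, mul_comm (d : ZMod (2 * n + 1)) b]
  -- surjectivity of k ↦ k * d
  have hsurj : ∀ j : ZMod (2 * n + 1), ∃ m : ℕ, m < 2 * n + 1 ∧ j = (m : ZMod (2 * n + 1)) * (d : ZMod (2 * n + 1)) := by
    intro j
    obtain ⟨u, hu⟩ := hdu
    refine ⟨(j * ((u⁻¹ : (ZMod (2 * n + 1))ˣ) : ZMod (2 * n + 1))).val, ZMod.val_lt _, ?_⟩
    rw [ZMod.natCast_rightInverse _]
    rw [mul_assoc, ← hu, Units.inv_mul, mul_one]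
  have hA : xd (((2 * n : ℕ) : ZMod (2 * n + 1)) * (d : ZMod (2 * n + 1))) = false := by
    rw [hxd]
    simp only [hval (2 * n) (by omega), decide_eq_false_iff_not]
    omega
  have hB : xd (((n : ℕ) : ZMod (2 * n + 1)) * (d : ZMod (2 * n + 1))) = false := by
    rw [hxd]
    simp only [hval n (by omega), decide_eq_false_iff_not]
    omega
  have hAB : ((2 * n : ℕ) : ZMod (2 * n + 1)) * (d : ZMod (2 * n + 1)) ≠ ((n : ℕ) : ZMod (2 * n + 1)) * (d : ZMod (2 * n + 1)) := by
    intro h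
    have := hcastinj (2 * n) n (by omega) (by omega) (hcancel _ _ h)
    omega
  -- the base filter
  have hfil : (Finset.univ.filter fun j : ZMod (2 * n + 1) => xd j = true)
      = (Finset.range n).image (fun m : ℕ => (m : ZMod (2 * n + 1)) * (d : ZMod (2 * n + 1))) := by
    ext j
    simp only [Finset.mem_filter, Finset.mem_univ, true_and, Finset.mem_image,
      Finset.mem_range]
    constructor
    · intro hj
      obtain ⟨m, hm, rfl⟩ := hsurj j
      rw [hxd, hval m hm, decide_eq_true_iff] at hj
      exact ⟨m, hj, rfl⟩
    · rintro ⟨m, hm, rfl⟩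
      rw [hxd, hval m (by omega), decide_eq_true_iff]
      exact hm
  have hinjOn : Set.InjOn (fun m : ℕ => (m : ZMod (2 * n + 1)) * (d : ZMod (2 * n + 1))) (Finset.range n) := by
    intro a ha b hb h
    simp only [Finset.coe_range, Set.mem_Iio] at ha hb
    exact hcastinj a b (by omega) (by omega) (hcancel _ _ h)
  have hcard : (Finset.univ.filter fun j : ZMod (2 * n + 1) => xd j = true).card = n := by
    rw [hfil, Finset.card_image_of_injOn hinjOn, Finset.card_range]
  -- filters of updates
  have hupd : ∀ a : ZMod (2 * n + 1), xd a = false →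
      (Finset.univ.filter fun j : ZMod (2 * n + 1) => Function.update xd a true j = true)
        = insert a (Finset.univ.filter fun j : ZMod (2 * n + 1) => xd j = true) := by
    intro a ha
    ext j
    simp only [Finset.mem_filter, Finset.mem_univ, true_and, Finset.mem_insert,
      Function.update_apply]
    by_cases h : j = a <;> simp [h]
  have hcardupd : ∀ a : ZMod (2 * n + 1), xd a = false →
      (Finset.univ.filter fun j : ZMod (2 * n + 1) => Function.update xd a true j = true).card
        = n + 1 := by
    intro a ha
    rw [hupd a ha, Finset.card_insert_of_notMem (by simp [ha]), hcard]
  refine ⟨hA, hB, hcard, ?_, hcardupd _ hA, hcardupd _ hB, ?_⟩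
  · intro h
    have := congrFun h (((n : ℕ) : ZMod (2 * n + 1)) * (d : ZMod (2 * n + 1)))
    rw [Function.update_apply, if_neg (fun hh : _ = _ => hAB hh.symm),
      Function.update_self, hB] at this
    exact Bool.false_ne_true this
  · intro j
    obtain ⟨m, hm, rfl⟩ := hsurj j
    have hstep : (m : ZMod (2 * n + 1)) * (d : ZMod (2 * n + 1)) + (d : ZMod (2 * n + 1))
        = ((m + 1 : ℕ) : ZMod (2 * n + 1)) * (d : ZMod (2 * n + 1)) := by
      push_cast
      ring
    rw [hstep]
    by_cases hm2n : m = 2 * n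
    · subst hm2n
      rw [Function.update_self]
      have h0 : ((2 * n + 1 : ℕ) : ZMod (2 * n + 1)) = 0 := by
        exact_mod_cast ZMod.natCast_self (2 * n + 1)
      rw [h0, zero_mul]
      have hne : (0 : ZMod (2 * n + 1)) ≠ ((n : ℕ) : ZMod (2 * n + 1)) * (d : ZMod (2 * n + 1)) := by
        intro h
        have : ((0 : ℕ) : ZMod (2 * n + 1)) * (d : ZMod (2 * n + 1)) = ((n : ℕ) : ZMod (2 * n + 1)) * (d : ZMod (2 * n + 1)) := by
          simpa using h
        have := hcastinj 0 n (by omega) (by omega) (hcancel _ _ this)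
        omega
      rw [Function.update_apply, if_neg hne]
      have : xd (0 : ZMod (2 * n + 1)) = decide ((0 : ZMod (2 * n + 1)).val < n) := by
        have := hxd 0
        rwa [zero_mul] at this
      rw [this, ZMod.val_zero]
      exact (decide_eq_true (by omega : 0 < n)).symm
    · have hLne : (m : ZMod (2 * n + 1)) * (d : ZMod (2 * n + 1)) ≠ ((2 * n : ℕ) : ZMod (2 * n + 1)) * (d : ZMod (2 * n + 1)) := by
        intro h
        exact hm2n (hcastinj m (2 * n) hm (by omega) (hcancel _ _ h))
      rw [Function.update_apply, if_neg hLne, hxd, hval m hm]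
      by_cases hmn : m + 1 = n
      · have hReq : ((m + 1 : ℕ) : ZMod (2 * n + 1)) * (d : ZMod (2 * n + 1))
            = ((n : ℕ) : ZMod (2 * n + 1)) * (d : ZMod (2 * n + 1)) := by rw [hmn]
        rw [hReq, Function.update_self]
        simp only [decide_eq_true_iff]
        omega
      · have hRne : ((m + 1 : ℕ) : ZMod (2 * n + 1)) * (d : ZMod (2 * n + 1))
            ≠ ((n : ℕ) : ZMod (2 * n + 1)) * (d : ZMod (2 * n + 1)) := by
          intro h
          exact hmn (hcastinj (m + 1) n (by omega) (by omega) (hcancel _ _ h))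
        rw [Function.update_apply, if_neg hRne, hxd, hval (m + 1) (by omega)]
        congr 1
        simp only [eq_iff_iff]
        omega
end

section
/- For any rooted tree x (a Dyck word of length 2n, n ≥ 2) and its periodic path under the middle-levels map f, the number κ(x·0) of applications of f needed to return to the same necklace as the starting string equals 2·λ(t(x)), where λ is the rotation period of the rooted tree; in particular κ ≥ 4. -/
namespace KappaAux16

lemma count_tf (l : List Bool) : l.count true + l.count false = l.length := by
  induction l with
  | nil => simp
  | cons a t ih => cases a <;> simp [List.count_cons] <;> omega

lemma count_take_add_drop (l : List Bool) (k : ℕ) (b : Bool) :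
    (l.take k).count b + (l.drop k).count b = l.count b := by
  rw [← List.count_append, List.take_append_drop]

lemma rotate_congr {l : List Bool} {a b : ℕ} (h : a % l.length = b % l.length) :
    l.rotate a = l.rotate b := by
  rw [← List.rotate_mod, h, List.rotate_mod]

lemma mod_helper {m L s : ℕ} (hL : L ≤ m) (h : (s + L) % m = 0) :
    (m - L) % m = s % m := by
  have h1 : (m - L) + L ≡ s + L [MOD m] := by
    unfold Nat.ModEq
    rw [show m - L + L = m by omega, Nat.mod_self, h]
  exact Nat.ModEq.add_right_cancel' L h1

lemma mod_helper2 {m L s : ℕ} (c : ℕ) (hL : L ≤ m) (h : (s + L) % m = 0) :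
    (c + (m - L)) % m = (s + c) % m := by
  have h1 : (m - L) % m = s % m := mod_helper hL h
  have h2 : c + (m - L) ≡ c + s [MOD m] := Nat.ModEq.add_left c h1
  calc (c + (m - L)) % m = (c + s) % m := h2
    _ = (s + c) % m := by rw [Nat.add_comm]

lemma dyck_mid_prefix {v : List Bool} (hv : IsDyck v) (j : ℕ) :
    (((true :: v) ++ [false]).take j).count false ≤
      (((true :: v) ++ [false]).take j).count true := by
  cases j with
  | zero => simp
  | succ j =>
    rw [List.cons_append, List.take_succ_cons, List.take_append]
    have h1 := hv.2 j
    have h2 : ((([false] : List Bool)).take (j - v.length)).count false ≤ 1 := by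
      calc _ ≤ ((([false] : List Bool)).take (j - v.length)).length := List.count_le_length ..
        _ ≤ 1 := by simp
    have h3 : ((([false] : List Bool)).take (j - v.length)).count true = 0 := by
      rcases Nat.eq_zero_or_pos (j - v.length) with h | h
      · simp [h]
      · have : j - v.length = (j - v.length - 1) + 1 := by omega
        rw [this]; simp
    simp only [List.count_cons, List.count_append]
    simp
    omega

lemma dyck_mid {u v : List Bool} (hu : IsDyck u) (hv : IsDyck v) :
    IsDyck (u ++ true :: v ++ [false]) := by
  have hu1 := hu.1; have hv1 := hv.1
  constructor
  · simp [List.count_append, List.count_cons]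
    omega
  · intro k
    rw [List.append_assoc, List.take_append]
    simp only [List.count_append]
    have h1 := hu.2 k
    have h2 := dyck_mid_prefix hv (k - u.length)
    omega

lemma head_true {w : List Bool} (hw : IsDyck w) (hne : w ≠ []) : ∃ t, w = true :: t := by
  cases w with
  | nil => simp at hne
  | cons a t =>
    cases a
    · have h := hw.2 1
      simp [List.count_cons] at h
    · exact ⟨t, rfl⟩

end KappaAux16
namespace KappaAux16

lemma dyck_decomp {w : List Bool} (hw : IsDyck w) (hne : w ≠ []) :
    ∃ u v, IsDyck u ∧ IsDyck v ∧ w = true :: u ++ false :: v := by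
  classical
  have hlp : 0 < w.length := List.length_pos_iff.mpr hne
  have hex : ∃ k, 0 < k ∧ (w.take k).count false = (w.take k).count true :=
    ⟨w.length, hlp, by rw [List.take_length]; exact hw.1⟩
  set k := Nat.find hex with hkdef
  obtain ⟨hkpos, hkbal⟩ := Nat.find_spec hex
  rw [← hkdef] at hkpos hkbal
  have hkle : k ≤ w.length := Nat.find_le ⟨hlp, by rw [List.take_length]; exact hw.1⟩
  have hmin : ∀ m, 0 < m → m < k → (w.take m).count false + 1 ≤ (w.take m).count true := by
    intro m hm hmk
    have h1 := Nat.find_min hex hmk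
    have h2 := hw.2 m
    omega
  obtain ⟨t0, rfl⟩ := head_true hw hne
  have hk2 : 2 ≤ k := by
    rcases Nat.lt_or_ge k 2 with h | h
    · have hk1 : k = 1 := by omega
      rw [hk1] at hkbal
      simp [List.count_cons] at hkbal
    · exact h
  have hlenw : (true :: t0).length = t0.length + 1 := by simp
  -- the prefix of length k is true :: u ++ [false]
  set u := t0.take (k - 2) with hudef
  have hul : u.length = k - 2 := by
    rw [hudef, List.length_take]; omega
  have htake1 : (true :: t0).take (k - 1) = true :: u := by
    have : k - 1 = (k - 2) + 1 := by omega
    rw [this, List.take_succ_cons, hudef]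
  -- last char of the prefix of length k
  set p := (true :: t0).take k with hpdef
  have hpl : p.length = k := by rw [hpdef, List.length_take]; omega
  have hpne : p ≠ [] := by intro h; rw [h] at hpl; simp at hpl; omega
  have hdrop : p.dropLast = true :: u := by
    rw [List.dropLast_eq_take, hpl, hpdef, List.take_take, ← htake1]
    congr 1; omega
  have hplast : p.dropLast ++ [p.getLast hpne] = p := List.dropLast_append_getLast hpne
  have hlastfalse : p.getLast hpne = false := by
    by_contra hc
    have hc' : p.getLast hpne = true := by
      cases hgl : p.getLast hpne
      · exact absurd hgl hc
      · rfl
    have hcnt : p.count false = p.count true := hkbal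
    rw [← hplast, hdrop, hc'] at hcnt
    have hm := hmin (k-1) (by omega) (by omega)
    rw [htake1] at hm
    simp [List.count_append, List.count_cons] at hcnt hm
    omega
  have hptake : (true :: t0).take k = (true :: u) ++ [false] := by
    rw [← hpdef, ← hplast, hdrop, hlastfalse]
  -- u is Dyck
  have hubal : u.count false = u.count true := by
    have := hkbal
    rw [hpdef, hptake] at this
    simp [List.count_append, List.count_cons] at this
    omega
  have hud : IsDyck u := by
    refine ⟨hubal, fun j => ?_⟩
    rcases le_or_gt u.length j with hj | hj
    · rw [List.take_of_length_le hj]; omega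
    · have hjk : j + 1 < k := by omega
      have hm := hmin (j+1) (by omega) hjk
      have heq2 : (true :: t0).take (j+1) = true :: u.take j := by
        rw [List.take_succ_cons, hudef, List.take_take, show min j (k-2) = j by omega]
      rw [heq2] at hm
      simp [List.count_cons] at hm
      omega
  -- v is Dyck
  set v := (true :: t0).drop k with hvdef
  have hvbal : v.count false = v.count true := by
    have h1 := count_take_add_drop (true :: t0) k false
    have h2 := count_take_add_drop (true :: t0) k true
    rw [← hpdef, ← hvdef] at h1 h2
    have h3 := hw.1
    have h4 := hkbal
    omega
  have hvd : IsDyck v := by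
    refine ⟨hvbal, fun j => ?_⟩
    have hsplit : (true :: t0).take (k + j) = p ++ v.take j := by
      rw [List.take_add, hpdef, hvdef]
    have h2 := hw.2 (k + j)
    rw [hsplit] at h2
    simp only [List.count_append] at h2
    have hb : p.count false = p.count true := hkbal
    omega
  refine ⟨u, v, hud, hvd, ?_⟩
  calc true :: t0 = (true :: t0).take k ++ (true :: t0).drop k := (List.take_append_drop _ _).symm
    _ = ((true :: u) ++ [false]) ++ v := by rw [hptake, ← hvdef]
    _ = true :: u ++ false :: v := by simp

end KappaAux16
namespace KappaAux16

lemma parse_le {u1 v1 u2 v2 : List Bool} (hu1 : IsDyck u1) (hv1 : IsDyck v1) (hu2 : IsDyck u2)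
    (h : u1 ++ true :: v1 ++ [false] = u2 ++ true :: v2 ++ [false])
    (hle : u1.length ≤ u2.length) : u1.length = u2.length := by
  by_contra hne
  have hlt : u1.length < u2.length := lt_of_le_of_ne hle hne
  have hlen : u1.length + v1.length = u2.length + v2.length := by
    have := congrArg List.length h; simp at this; omega
  -- take u2.length of both sides
  have h2 : ((u1 ++ true :: v1) ++ [false]).take u2.length = u2 := by
    rw [h]
    rw [show u2 ++ true :: v2 ++ [false] = u2 ++ (true :: v2 ++ [false]) by simp]
    rw [List.take_append, List.take_of_length_le (le_refl _),
      Nat.sub_self, List.take_zero, List.append_nil]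
  set j := u2.length - u1.length with hjdef
  have hj1 : 1 ≤ j := by omega
  have hjv : j ≤ v1.length := by omega
  have h3 : ((u1 ++ true :: v1) ++ [false]).take u2.length
      = u1 ++ true :: v1.take (j - 1) := by
    rw [show (u1 ++ true :: v1) ++ [false] = u1 ++ ((true :: v1) ++ [false]) by simp]
    rw [List.take_append]
    rw [List.take_of_length_le hle]
    congr 1
    rw [List.take_append]
    have hj0 : u2.length - u1.length - (true :: v1).length = 0 := by simp; omega
    rw [hj0, List.take_zero, List.append_nil]
    have : u2.length - u1.length = (j - 1) + 1 := by omega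
    rw [this, List.take_succ_cons]
  rw [h3] at h2
  have hc1 := congrArg (List.count false) h2
  have hc2 := congrArg (List.count true) h2
  simp only [List.count_append, List.count_cons] at hc1 hc2
  simp at hc1 hc2
  have e1 := hu1.1
  have e2 := hu2.1
  have e3 := hv1.2 (j - 1)
  omega

lemma parse_uniq {u1 v1 u2 v2 : List Bool} (hu1 : IsDyck u1) (hv1 : IsDyck v1)
    (hu2 : IsDyck u2) (hv2 : IsDyck v2)
    (h : u1 ++ true :: v1 ++ [false] = u2 ++ true :: v2 ++ [false]) :
    u1 = u2 ∧ v1 = v2 := by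
  have hlen : u1.length = u2.length := by
    rcases le_total u1.length u2.length with hle | hle
    · exact parse_le hu1 hv1 hu2 h hle
    · exact (parse_le hu2 hv2 hu1 h.symm hle).symm
  have hu : u1 = u2 := by
    have t1 : (u1 ++ (true :: v1 ++ [false])).take u1.length = u1 := List.take_left' rfl
    have t2 : (u2 ++ (true :: v2 ++ [false])).take u2.length = u2 := List.take_left' rfl
    rw [← t1, ← t2, ← hlen]
    rw [show u1 ++ (true :: v1 ++ [false]) = u1 ++ true :: v1 ++ [false] by simp]
    rw [show u2 ++ (true :: v2 ++ [false]) = u2 ++ true :: v2 ++ [false] by simp]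
    rw [h]
  refine ⟨hu, ?_⟩
  rw [show u1 ++ true :: v1 ++ [false] = u1 ++ (true :: v1 ++ [false]) by simp,
    show u2 ++ true :: v2 ++ [false] = u2 ++ (true :: v2 ++ [false]) by simp, hu] at h
  have h5 := List.append_cancel_left h
  rw [List.cons_append, List.cons_append] at h5
  injection h5 with h5a h5b
  exact List.append_cancel_right h5b

-- rotation uniqueness for Dyck ++ [false]
lemma uniqA {w w' : List Bool} (hw : IsDyck w) (hw' : IsDyck w')
    (hlen : w'.length = w.length) {t : ℕ} (ht : t < w.length + 1)
    (h : (w ++ [false]).rotate t = w' ++ [false]) : t = 0 ∧ w = w' := by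
  have ht0 : t = 0 := by
    by_contra htne
    have htpos : 0 < t := Nat.pos_of_ne_zero htne
    set s := w ++ [false] with hsdef
    have hsl : s.length = w.length + 1 := by simp [hsdef]
    have hrot : s.drop t ++ s.take t = w' ++ [false] := by
      rw [← List.rotate_eq_drop_append_take (by omega : t ≤ s.length), h]
    have hdl : (s.drop t).length = w.length + 1 - t := by simp [hsl]
    have hdrop : s.drop t = (w' ++ [false]).take (w.length + 1 - t) := by
      rw [← hrot, List.take_append, hdl, Nat.sub_self, List.take_zero,
        List.append_nil, List.take_of_length_le (le_of_eq hdl)]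
    have hdrop2 : s.drop t = w'.take (w.length + 1 - t) := by
      rw [hdrop, List.take_append,
        show w.length + 1 - t - w'.length = 0 by omega, List.take_zero, List.append_nil]
    have htak : s.take t = w.take t := by
      rw [hsdef, List.take_append,
        show t - w.length = 0 by omega, List.take_zero, List.append_nil]
    -- counting
    have c1 := count_take_add_drop s t false
    have c2 := count_take_add_drop s t true
    have c3 : s.count false = w.count false + 1 := by simp [hsdef]
    have c4 : s.count true = w.count true := by simp [hsdef]
    have c5 := hw.2 t
    have c6 := hw'.2 (w.length + 1 - t)
    rw [← hdrop2] at c6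
    rw [htak] at c1 c2
    have c7 := hw.1
    omega
  refine ⟨ht0, ?_⟩
  rw [ht0, List.rotate_zero] at h
  exact List.append_cancel_right h

-- rotation uniqueness for true :: Dyck
lemma uniqB {w w' : List Bool} (hw : IsDyck w) (hw' : IsDyck w')
    (hlen : w'.length = w.length) {t : ℕ} (ht : t < w.length + 1)
    (h : (true :: w).rotate t = true :: w') : t = 0 ∧ w = w' := by
  have ht0 : t = 0 := by
    by_contra htne
    have htpos : 0 < t := Nat.pos_of_ne_zero htne
    set s := true :: w with hsdef
    have hsl : s.length = w.length + 1 := by simp [hsdef]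
    have hrot : s.drop t ++ s.take t = true :: w' := by
      rw [← List.rotate_eq_drop_append_take (by omega : t ≤ s.length), h]
    have hdl : (s.drop t).length = w.length + 1 - t := by simp [hsl]
    have hdrop : s.drop t = (true :: w').take (w.length + 1 - t) := by
      rw [← hrot, List.take_append, hdl, Nat.sub_self, List.take_zero,
        List.append_nil, List.take_of_length_le (le_of_eq hdl)]
    have hdrop2 : s.drop t = true :: w'.take (w.length - t) := by
      rw [hdrop, show w.length + 1 - t = (w.length - t) + 1 by omega, List.take_succ_cons]
    have htak : s.take t = true :: w.take (t - 1) := by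
      conv_lhs => rw [hsdef, show t = (t - 1) + 1 by omega, List.take_succ_cons]
    have c1 := count_take_add_drop s t false
    have c2 := count_take_add_drop s t true
    have c3 : s.count false = w.count false := by simp [hsdef]
    have c4 : s.count true = w.count true + 1 := by simp [hsdef]
    have c5 := hw.2 (t - 1)
    have c6 := hw'.2 (w.length - t)
    have c8 := congrArg (List.count false) hdrop2
    have c9 := congrArg (List.count true) hdrop2
    simp only [List.count_cons] at c8 c9
    simp at c8 c9
    rw [htak] at c1 c2
    simp only [List.count_cons] at c1 c2
    simp at c1 c2
    have c7 := hw.1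
    omega
  refine ⟨ht0, ?_⟩
  rw [ht0, List.rotate_zero] at h
  injection h with _ h2

end KappaAux16
namespace KappaAux16

set_option maxHeartbeats 1000000 in
lemma stepA (n : ℕ) (hn : 2 ≤ n)
    (f : List Bool → List Bool) (ell : List Bool → ℕ)
    (hf1 : ∀ u v : List Bool, IsDyck u → IsDyck v →
      f (true :: u ++ false :: v ++ [false]) = true :: u ++ true :: v ++ [false])
    (hellA : ∀ x : List Bool, x.length = 2 * n + 1 → x.count true = n →
      ell x ≤ 2 * n ∧ IsDyck ((x.rotate (ell x)).take (2 * n)))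
    (hf3 : ∀ x : List Bool, x.length = 2 * n + 1 →
      (x.count true = n ∨ x.count true = n + 1) →
      f x = (f (x.rotate (ell x))).rotate (2 * n + 1 - ell x))
    {w u v : List Bool} (hw : IsDyck w) (hl : w.length = 2 * n)
    (hu : IsDyck u) (hv : IsDyck v) (hwuv : w = true :: u ++ false :: v) (s : ℕ) :
    f ((w ++ [false]).rotate s) = (true :: u ++ true :: v ++ [false]).rotate s := by
  have hcw := count_tf w
  have hw1 := hw.1
  have hctw : w.count true = n := by omega
  have hlu : u.length + v.length + 2 = 2 * n := by
    have := congrArg List.length hwuv; simp at this; omega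
  set x0 : List Bool := w ++ [false] with hx0def
  clear_value x0
  have lenx0 : x0.length = 2 * n + 1 := by rw [hx0def]; simp; omega
  have hctx0 : x0.count true = n := by
    rw [hx0def]; simp [List.count_append]; omega
  set y0 := x0.rotate s with hy0def
  clear_value y0
  have leny0 : y0.length = 2 * n + 1 := by rw [hy0def, List.length_rotate]; exact lenx0
  have hcty0 : y0.count true = n := by
    rw [hy0def, (List.rotate_perm x0 s).count_eq]; exact hctx0
  obtain ⟨hL, hdy⟩ := hellA y0 leny0 hcty0
  set L := ell y0 with hLdef
  clear_value L
  set t := (s + L) % (2 * n + 1) with htdef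
  have htlt : t < 2 * n + 1 := by rw [htdef]; exact Nat.mod_lt _ (by omega)
  have hz : y0.rotate L = x0.rotate t := by
    rw [hy0def, List.rotate_rotate]
    have h5 : x0.rotate ((s + L) % x0.length) = x0.rotate (s + L) := List.rotate_mod ..
    rw [lenx0] at h5
    rw [htdef]
    exact h5.symm
  set z := x0.rotate t with hzdef
  clear_value z
  have hzdyck : IsDyck (z.take (2 * n)) := by rw [← hz]; exact hdy
  have lenz : z.length = 2 * n + 1 := by rw [hzdef, List.length_rotate]; exact lenx0
  have hctz : z.count true = n := by
    rw [hzdef, (List.rotate_perm x0 t).count_eq]; exact hctx0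
  have hzdrop : z.drop (2 * n) = [false] := by
    have hld : (z.drop (2 * n)).length = 1 := by rw [List.length_drop]; omega
    obtain ⟨a, ha⟩ := List.length_eq_one_iff.mp hld
    have hcz := count_take_add_drop z (2 * n) true
    have hbal := hzdyck.1
    have hctt := count_tf (z.take (2 * n))
    have lenzt : (z.take (2 * n)).length = 2 * n := by rw [List.length_take]; omega
    cases a
    · rw [ha]
    · exfalso; rw [ha] at hcz; simp at hcz; omega
  have hzsplit : z = z.take (2 * n) ++ [false] := by
    conv_lhs => rw [← List.take_append_drop (2 * n) z]
    rw [hzdrop]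
  obtain ⟨ht0, hweq⟩ := uniqA hw hzdyck (by rw [List.length_take]; omega)
    (show t < w.length + 1 by omega)
    (show (w ++ [false]).rotate t = z.take (2 * n) ++ [false] by
      rw [← hx0def, ← hzdef]; exact hzsplit)
  have hmod : (s + L) % (2 * n + 1) = 0 := by rw [← htdef]; exact ht0
  have hy0rot : y0.rotate L = x0 := by rw [hz, hzdef, ht0, List.rotate_zero]
  have hfx0 : f x0 = true :: u ++ true :: v ++ [false] := by
    rw [hx0def, hwuv,
      show (true :: u ++ false :: v) ++ [false] = true :: u ++ false :: v ++ [false] by simp]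
    exact hf1 u v hu hv
  have h3 := hf3 y0 leny0 (Or.inl hcty0)
  rw [← hLdef, hy0rot, hfx0] at h3
  rw [h3]
  apply rotate_congr
  rw [show (true :: u ++ true :: v ++ [false]).length = 2 * n + 1 by simp; omega]
  exact mod_helper (by omega) hmod

set_option maxHeartbeats 1000000 in
lemma stepB (n : ℕ) (hn : 2 ≤ n)
    (f : List Bool → List Bool) (ell : List Bool → ℕ)
    (hf2 : ∀ u v : List Bool, IsDyck u → IsDyck v →
      f (true :: u ++ true :: v ++ [false]) = false :: u ++ true :: v ++ [false])
    (hellB : ∀ y : List Bool, y.length = 2 * n + 1 → y.count true = n + 1 →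
      ell y ≤ 2 * n ∧ IsDyck ((y.rotate (ell y)).drop 1))
    (hf3 : ∀ x : List Bool, x.length = 2 * n + 1 →
      (x.count true = n ∨ x.count true = n + 1) →
      f x = (f (x.rotate (ell x))).rotate (2 * n + 1 - ell x))
    {u v : List Bool} (hu : IsDyck u) (hv : IsDyck v)
    (hlu : u.length + v.length + 2 = 2 * n) (s : ℕ) :
    f ((true :: u ++ true :: v ++ [false]).rotate s)
      = ((u ++ true :: v ++ [false]) ++ [false]).rotate (s + 2 * n) := by
  have hcu := count_tf u
  have hcv := count_tf v
  have hu1 := hu.1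
  have hv1 := hv.1
  set M : List Bool := u ++ true :: v ++ [false] with hMdef
  clear_value M
  have hM : IsDyck M := by rw [hMdef]; exact dyck_mid hu hv
  have lenM : M.length = 2 * n := by rw [hMdef]; simp; omega
  set B : List Bool := true :: u ++ true :: v ++ [false] with hBdef
  clear_value B
  have hBM : B = true :: M := by rw [hBdef, hMdef]; simp
  have lenB : B.length = 2 * n + 1 := by rw [hBM]; simp [lenM]
  have hctB : B.count true = n + 1 := by
    rw [hBdef]; simp [List.count_append, List.count_cons]; omega
  set y1 := B.rotate s with hy1def
  clear_value y1
  have leny1 : y1.length = 2 * n + 1 := by rw [hy1def, List.length_rotate]; exact lenB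
  have hcty1 : y1.count true = n + 1 := by
    rw [hy1def, (List.rotate_perm B s).count_eq]; exact hctB
  obtain ⟨hL2, hdy2⟩ := hellB y1 leny1 hcty1
  set L2 := ell y1 with hL2def
  clear_value L2
  set t2 := (s + L2) % (2 * n + 1) with ht2def
  have ht2lt : t2 < 2 * n + 1 := by rw [ht2def]; exact Nat.mod_lt _ (by omega)
  have hz2 : y1.rotate L2 = B.rotate t2 := by
    rw [hy1def, List.rotate_rotate]
    have h5 : B.rotate ((s + L2) % B.length) = B.rotate (s + L2) := List.rotate_mod ..
    rw [lenB] at h5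
    rw [ht2def]
    exact h5.symm
  set z2 := B.rotate t2 with hz2def
  clear_value z2
  have lenz2 : z2.length = 2 * n + 1 := by rw [hz2def, List.length_rotate]; exact lenB
  have hctz2 : z2.count true = n + 1 := by
    rw [hz2def, (List.rotate_perm B t2).count_eq]; exact hctB
  have hdz2 : IsDyck (z2.drop 1) := by rw [← hz2]; exact hdy2
  obtain ⟨c, r2, hz2eq⟩ := List.exists_cons_of_ne_nil
    (show z2 ≠ [] by intro hc; rw [hc] at lenz2; simp at lenz2)
  have hr2 : z2.drop 1 = r2 := by rw [hz2eq]; rfl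
  have hdr2 : IsDyck r2 := by rw [← hr2]; exact hdz2
  have lenr2 : r2.length = 2 * n := by
    have := congrArg List.length hz2eq; simp at this; omega
  have hctr2 : r2.count true = n := by
    have h1 := count_tf r2
    have h2 := hdr2.1
    omega
  have hc : c = true := by
    cases c
    · exfalso
      have := congrArg (List.count true) hz2eq
      simp [List.count_cons] at this
      omega
    · rfl
  rw [hc] at hz2eq
  obtain ⟨ht20, hMeq⟩ := uniqB hM hdr2 (by omega) (show t2 < M.length + 1 by omega)
    (show (true :: M).rotate t2 = true :: r2 by rw [← hBM, ← hz2def]; exact hz2eq)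
  have hmod2 : (s + L2) % (2 * n + 1) = 0 := by rw [← ht2def]; exact ht20
  have hy1rot : y1.rotate L2 = B := by rw [hz2, hz2def, ht20, List.rotate_zero]
  have hfB : f B = false :: u ++ true :: v ++ [false] := by
    rw [hBdef]; exact hf2 u v hu hv
  have hC : (M ++ [false]).rotate (2 * n) = false :: u ++ true :: v ++ [false] := by
    rw [List.rotate_eq_drop_append_take (by simp [lenM] : 2 * n ≤ (M ++ [false]).length)]
    rw [List.drop_append, List.take_append]
    rw [List.drop_eq_nil_of_le (le_of_eq lenM), List.take_of_length_le (le_of_eq lenM),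
      show 2 * n - M.length = 0 by omega]
    simp [hMdef]
  have h3 := hf3 y1 leny1 (Or.inr hcty1)
  rw [← hL2def, hy1rot, hfB, ← hC, List.rotate_rotate] at h3
  rw [h3]
  apply rotate_congr
  rw [List.length_append, lenM]
  have := mod_helper2 (m := 2 * n + 1) (L := L2) (s := s) (2 * n) (by omega) hmod2
  simpa using this

lemma step (n : ℕ) (hn : 2 ≤ n)
    (f : List Bool → List Bool) (ell : List Bool → ℕ) (rho : List Bool → List Bool)
    (hrho : ∀ u v : List Bool, IsDyck u → IsDyck v →
      rho (true :: u ++ false :: v) = u ++ true :: v ++ [false])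
    (hf1 : ∀ u v : List Bool, IsDyck u → IsDyck v →
      f (true :: u ++ false :: v ++ [false]) = true :: u ++ true :: v ++ [false])
    (hf2 : ∀ u v : List Bool, IsDyck u → IsDyck v →
      f (true :: u ++ true :: v ++ [false]) = false :: u ++ true :: v ++ [false])
    (hellA : ∀ x : List Bool, x.length = 2 * n + 1 → x.count true = n →
      ell x ≤ 2 * n ∧ IsDyck ((x.rotate (ell x)).take (2 * n)))
    (hellB : ∀ y : List Bool, y.length = 2 * n + 1 → y.count true = n + 1 →
      ell y ≤ 2 * n ∧ IsDyck ((y.rotate (ell y)).drop 1))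
    (hf3 : ∀ x : List Bool, x.length = 2 * n + 1 →
      (x.count true = n ∨ x.count true = n + 1) →
      f x = (f (x.rotate (ell x))).rotate (2 * n + 1 - ell x))
    (w : List Bool) (hw : IsDyck w) (hl : w.length = 2 * n) (s : ℕ) :
    IsDyck (rho w) ∧ (rho w).length = 2 * n ∧
    (f ((w ++ [false]).rotate s)).count true = n + 1 ∧
    f (f ((w ++ [false]).rotate s)) = (rho w ++ [false]).rotate (s + 2 * n) := by
  have hwne : w ≠ [] := by intro hc; rw [hc] at hl; simp at hl; omega
  obtain ⟨u, v, hu, hv, hwuv⟩ := dyck_decomp hw hwne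
  have hcu := count_tf u
  have hcv := count_tf v
  have hu1 := hu.1
  have hv1 := hv.1
  have hlu : u.length + v.length + 2 = 2 * n := by
    have := congrArg List.length hwuv; simp at this; omega
  have hrhoM : rho w = u ++ true :: v ++ [false] := by rw [hwuv]; exact hrho u v hu hv
  have hA := stepA n hn f ell hf1 hellA hf3 hw hl hu hv hwuv s
  have hB := stepB n hn f ell hf2 hellB hf3 hu hv hlu s
  have hctB : (true :: u ++ true :: v ++ [false]).count true = n + 1 := by
    simp [List.count_append, List.count_cons]; omega
  refine ⟨?_, ?_, ?_, ?_⟩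
  · rw [hrhoM]; exact dyck_mid hu hv
  · rw [hrhoM]; simp; omega
  · rw [hA, (List.rotate_perm _ s).count_eq]; exact hctB
  · rw [hA, hB, hrhoM]

end KappaAux16
namespace KappaAux16

lemma all_true_aux : ∀ (u : List Bool), u = (true :: u).take u.length → ∀ b ∈ u, b = true := by
  intro u
  induction u with
  | nil => intro _ b hb; simp at hb
  | cons a t ih =>
    intro h b hb
    rw [show (a :: t).length = t.length + 1 by simp, List.take_succ_cons] at h
    injection h with h1 h2
    subst h1
    rcases List.mem_cons.mp hb with rfl | hb'
    · rfl
    · exact ih h2 b hb'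

lemma all_false_aux : ∀ (v : List Bool), false :: v = v ++ [false] → ∀ b ∈ v, b = false := by
  intro v
  induction v with
  | nil => intro _ b hb; simp at hb
  | cons a t ih =>
    intro h b hb
    rw [List.cons_append] at h
    injection h with h1 h2
    subst h1
    rcases List.mem_cons.mp hb with rfl | hb'
    · rfl
    · exact ih h2 b hb'

end KappaAux16


open KappaAux16 in
set_option maxHeartbeats 1000000 in
/-- Let `x` be a rooted tree, i.e. a Dyck word of length `2n` with
`n ≥ 2`, let `ρ` be the tree rotation `ρ(1 u 0 v) = u 1 v 0`, and let `f` be the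
middle-levels map (defined by `f(1 u 0 v 0) = 1 u 1 v 0`, `f(1 u 1 v 0) = 0 u 1 v 0` for
Dyck words `u,v`, extended by conjugation with the canonical rotation `ℓ`).  Then
`κ(x·0) := min{ i > 0 : f^i(x·0) is a cyclic rotation of x·0 }` equals `2·λ(x)` where
`λ(x) = min{ i ≥ 1 : ρ^i(x) = x }`; in particular `κ(x·0) ≥ 4`. -/
theorem kappa_eq_two_lam (n : ℕ) (hn : 2 ≤ n)
    (f : List Bool → List Bool) (ell : List Bool → ℕ) (rho : List Bool → List Bool)
    (hrho : ∀ u v : List Bool, IsDyck u → IsDyck v →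
      rho (true :: u ++ false :: v) = u ++ true :: v ++ [false])
    (hf1 : ∀ u v : List Bool, IsDyck u → IsDyck v →
      f (true :: u ++ false :: v ++ [false]) = true :: u ++ true :: v ++ [false])
    (hf2 : ∀ u v : List Bool, IsDyck u → IsDyck v →
      f (true :: u ++ true :: v ++ [false]) = false :: u ++ true :: v ++ [false])
    (hellA : ∀ x : List Bool, x.length = 2 * n + 1 → x.count true = n →
      ell x ≤ 2 * n ∧ IsDyck ((x.rotate (ell x)).take (2 * n)))
    (hellB : ∀ y : List Bool, y.length = 2 * n + 1 → y.count true = n + 1 →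
      ell y ≤ 2 * n ∧ IsDyck ((y.rotate (ell y)).drop 1))
    (hf3 : ∀ x : List Bool, x.length = 2 * n + 1 →
      (x.count true = n ∨ x.count true = n + 1) →
      f x = (f (x.rotate (ell x))).rotate (2 * n + 1 - ell x))
    (x : List Bool) (hx : IsDyck x) (hlen : x.length = 2 * n) :
    sInf {k | 0 < k ∧ ∃ r : ℕ, f^[k] (x ++ [false]) = (x ++ [false]).rotate r}
      = 2 * sInf {i | 0 < i ∧ rho^[i] x = x} ∧
    4 ≤ sInf {k | 0 < k ∧ ∃ r : ℕ, f^[k] (x ++ [false]) = (x ++ [false]).rotate r} := by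
  have hstep := fun (w : List Bool) (hw : IsDyck w) (hl : w.length = 2 * n) (s : ℕ) =>
    KappaAux16.step n hn f ell rho hrho hf1 hf2 hellA hellB hf3 w hw hl s
  have hiter : ∀ i : ℕ, IsDyck (rho^[i] x) ∧ (rho^[i] x).length = 2 * n ∧
      f^[2 * i] (x ++ [false]) = (rho^[i] x ++ [false]).rotate (2 * n * i) := by
    intro i
    induction i with
    | zero => exact ⟨hx, hlen, by simp⟩
    | succ i ih =>
      obtain ⟨hd, hldyn, heq⟩ := ih
      obtain ⟨hd2, hl2, _, heq2⟩ := hstep (rho^[i] x) hd hldyn (2 * n * i)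
      have hit : rho^[i + 1] x = rho (rho^[i] x) := Function.iterate_succ_apply' rho i x
      refine ⟨by rw [hit]; exact hd2, by rw [hit]; exact hl2, ?_⟩
      have h24 : 2 * (i + 1) = 2 + 2 * i := by ring
      rw [h24, Function.iterate_add_apply, heq]
      have h25 : f^[2] ((rho^[i] x ++ [false]).rotate (2 * n * i))
          = (rho (rho^[i] x) ++ [false]).rotate (2 * n * i + 2 * n) := by
        rw [show (2 : ℕ) = 1 + 1 by rfl, Function.iterate_add_apply]
        simp only [Function.iterate_one]
        exact heq2
      rw [h25, hit, show 2 * n * i + 2 * n = 2 * n * (i + 1) by ring]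
  have hodd : ∀ i : ℕ, (f^[2 * i + 1] (x ++ [false])).count true = n + 1 := by
    intro i
    obtain ⟨hd, hldyn, heq⟩ := hiter i
    obtain ⟨_, _, hct, _⟩ := hstep (rho^[i] x) hd hldyn (2 * n * i)
    rw [Function.iterate_succ_apply', heq]
    exact hct
  have hcw := count_tf x
  have hx1 := hx.1
  have hctx0 : (x ++ [false]).count true = n := by
    simp [List.count_append]; omega
  have hmem : ∀ k, (0 < k ∧ ∃ r : ℕ, f^[k] (x ++ [false]) = (x ++ [false]).rotate r)
      ↔ (∃ i, 0 < i ∧ k = 2 * i ∧ rho^[i] x = x) := by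
    intro k
    constructor
    · rintro ⟨hk, r, hr⟩
      rcases Nat.even_or_odd k with ⟨i, hi⟩ | ⟨i, hi⟩
      · have hk2 : k = 2 * i := by omega
        have hipos : 0 < i := by omega
        refine ⟨i, hipos, hk2, ?_⟩
        obtain ⟨hd, hldyn, heq⟩ := hiter i
        rw [hk2, heq] at hr
        set m := 2 * n + 1 with hmdef
        set a := 2 * n * i with hadef
        set b := m - a % m with hbdef
        have hlen1 : (rho^[i] x ++ [false]).length = m := by
          rw [hmdef]; simp [hldyn]
        have hlen0 : (x ++ [false]).length = m := by
          rw [hmdef]; simp [hlen]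
        have hmpos : 0 < m := by rw [hmdef]; omega
        have h2 : a % m < m := Nat.mod_lt _ hmpos
        have hab : (a + b) % m = 0 := by
          have h5 : a % m + b ≡ a + b [MOD m] := Nat.ModEq.add_right b (Nat.mod_modEq a m)
          have h6 : a % m + b = m := by omega
          calc (a + b) % m = (a % m + b) % m := (h5 : (a % m + b) % m = (a + b) % m).symm
            _ = m % m := by rw [h6]
            _ = 0 := Nat.mod_self m
        have hPr : rho^[i] x ++ [false] = (x ++ [false]).rotate ((r + b) % m) := by
          have h1 := congrArg (fun l => l.rotate b) hr
          simp only [List.rotate_rotate] at h1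
          have h2' : (rho^[i] x ++ [false]).rotate (a + b) = rho^[i] x ++ [false] := by
            rw [← List.rotate_mod, hlen1, hab, List.rotate_zero]
          have h3' : (x ++ [false]).rotate (r + b) = (x ++ [false]).rotate ((r + b) % m) := by
            rw [← List.rotate_mod, hlen0]
          exact h2'.symm.trans (h1.trans h3')
        have h4 : (r + b) % m < m := Nat.mod_lt _ hmpos
        obtain ⟨_, hxeq⟩ := uniqA hx hd (hldyn.trans hlen.symm)
          (show (r + b) % m < x.length + 1 by omega) hPr.symm
        exact hxeq.symm
      · exfalso
        have h1 := hodd i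
        rw [← hi, hr] at h1
        have h2 : ((x ++ [false]).rotate r).count true = n := by
          rw [(List.rotate_perm _ _).count_eq]; exact hctx0
        omega
    · rintro ⟨i, hipos, rfl, hfix⟩
      refine ⟨by omega, ⟨2 * n * i, ?_⟩⟩
      obtain ⟨_, _, heq⟩ := hiter i
      rw [heq, hfix]
  have hrho_pres : ∀ (y : List Bool), IsDyck y → y.length = 2 * n →
      ∀ m, IsDyck (rho^[m] y) ∧ (rho^[m] y).length = 2 * n := by
    intro y hy hly m
    induction m with
    | zero => simpa using ⟨hy, hly⟩
    | succ m ih =>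
      obtain ⟨h1, h2⟩ := ih
      obtain ⟨h3, h4, _, _⟩ := hstep _ h1 h2 0
      rw [Function.iterate_succ_apply']
      exact ⟨h3, h4⟩
  have hrho_inj : ∀ a b : List Bool, IsDyck a → a.length = 2 * n → IsDyck b →
      b.length = 2 * n → rho a = rho b → a = b := by
    intro a b ha hla hb hlb hab
    have hane : a ≠ [] := by intro hc; rw [hc] at hla; simp at hla; omega
    have hbne : b ≠ [] := by intro hc; rw [hc] at hlb; simp at hlb; omega
    obtain ⟨u1, v1, hu1, hv1, ha1⟩ := dyck_decomp ha hane
    obtain ⟨u2, v2, hu2, hv2, hb1⟩ := dyck_decomp hb hbne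
    rw [ha1, hb1, hrho u1 v1 hu1 hv1, hrho u2 v2 hu2 hv2] at hab
    obtain ⟨he1, he2⟩ := parse_uniq hu1 hv1 hu2 hv2 hab
    rw [ha1, hb1, he1, he2]
  have hcancel : ∀ m (y : List Bool), IsDyck y → y.length = 2 * n →
      rho^[m] y = rho^[m] x → y = x := by
    intro m
    induction m with
    | zero => intro y _ _ h; simpa using h
    | succ m ih =>
      intro y hy hly h
      rw [Function.iterate_succ_apply', Function.iterate_succ_apply'] at h
      exact ih y hy hly (hrho_inj _ _ (hrho_pres y hy hly m).1 (hrho_pres y hy hly m).2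
        (hrho_pres x hx hlen m).1 (hrho_pres x hx hlen m).2 h)
  have hfix_ex : ∃ d, 0 < d ∧ rho^[d] x = x := by
    obtain ⟨a, b, hne, hgeq⟩ := Finite.exists_ne_map_eq_of_infinite
      (fun (i : ℕ) (j : Fin (2 * n)) => (rho^[i] x).getD j false)
    have hlsts : ∀ a b : ℕ,
        (fun j : Fin (2 * n) => (rho^[a] x).getD j false)
          = (fun j : Fin (2 * n) => (rho^[b] x).getD j false) → rho^[a] x = rho^[b] x := by
      intro a b hfe
      have hla := (hrho_pres x hx hlen a).2
      have hlb := (hrho_pres x hx hlen b).2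
      apply List.ext_getElem (hla.trans hlb.symm)
      intro idx h1 h2
      have h3 := congrFun hfe ⟨idx, by omega⟩
      simp only at h3
      rwa [List.getD_eq_getElem _ _ (by omega), List.getD_eq_getElem _ _ (by omega)] at h3
    have key : ∀ a b : ℕ, a < b → rho^[a] x = rho^[b] x → ∃ d, 0 < d ∧ rho^[d] x = x := by
      intro a b hab heq
      have hd : rho^[a] (rho^[b - a] x) = rho^[a] x := by
        rw [← Function.iterate_add_apply, show a + (b - a) = b by omega]
        exact heq.symm
      exact ⟨b - a, by omega,
        hcancel a _ (hrho_pres x hx hlen (b - a)).1 (hrho_pres x hx hlen (b - a)).2 hd⟩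
    rcases lt_trichotomy a b with h | h | h
    · exact key a b h (hlsts a b hgeq)
    · exact absurd h hne
    · exact key b a h (hlsts b a hgeq.symm)
  have hrho_ne : ¬ rho^[1] x = x := by
    simp only [Function.iterate_one]
    intro hfix
    have hxne : x ≠ [] := by intro hc; rw [hc] at hlen; simp at hlen; omega
    obtain ⟨u, v, hu, hv, hxuv⟩ := dyck_decomp hx hxne
    have heqs : u ++ true :: v ++ [false] = true :: u ++ false :: v := by
      rw [hxuv] at hfix
      rw [← hrho u v hu hv, hfix]
    have hht := congrArg (List.take u.length) heqs
    have h1 : ((u ++ true :: v) ++ [false]).take u.length = u := by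
      rw [List.take_append, List.take_append,
        List.take_length, Nat.sub_self, List.take_zero, List.append_nil,
        show u.length - (u ++ true :: v).length = 0 by simp, List.take_zero, List.append_nil]
    have h2 : ((true :: u) ++ false :: v).take u.length = (true :: u).take u.length := by
      rw [List.take_append,
        show u.length - (true :: u).length = 0 by simp, List.take_zero, List.append_nil]
    have ht2 : u = (true :: u).take u.length := h1.symm.trans (hht.trans h2)
    have hcf : u.count false = 0 := by
      rw [List.count_eq_zero]
      intro hmemf
      have := all_true_aux u ht2 false hmemf
      simp at this
    have hcu := count_tf u
    have hu1 := hu.1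
    have hunil : u = [] := by
      have : u.length = 0 := by omega
      exact List.eq_nil_of_length_eq_zero this
    subst hunil
    simp only [List.nil_append, List.cons_append, List.nil_append] at heqs
    have heqs2 : false :: v = v ++ [false] := by
      injection heqs with _ h3
      exact h3.symm
    have hctv : v.count true = 0 := by
      rw [List.count_eq_zero]
      intro hmemt
      have := all_false_aux v heqs2 true hmemt
      simp at this
    have hcv := count_tf v
    have hv1 := hv.1
    have hvnil : v = [] := by
      have : v.length = 0 := by omega
      exact List.eq_nil_of_length_eq_zero this
    subst hvnil
    rw [hxuv] at hlen
    simp at hlen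
    omega
  -- final assembly
  set Q : Set ℕ := {i | 0 < i ∧ rho^[i] x = x} with hQdef
  set P : Set ℕ := {k | 0 < k ∧ ∃ r : ℕ, f^[k] (x ++ [false]) = (x ++ [false]).rotate r}
    with hPdef
  obtain ⟨d, hd1, hd2⟩ := hfix_ex
  have hQne : Q.Nonempty := ⟨d, hd1, hd2⟩
  obtain ⟨hm0pos, hm0fix⟩ := Nat.sInf_mem hQne
  have h2m : 2 * sInf Q ∈ P := (hmem (2 * sInf Q)).mpr ⟨sInf Q, hm0pos, rfl, hm0fix⟩
  have hPne : P.Nonempty := ⟨2 * sInf Q, h2m⟩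
  obtain ⟨i0, hi0pos, hi0eq, hi0fix⟩ := (hmem (sInf P)).mp (Nat.sInf_mem hPne)
  have hle1 : sInf P ≤ 2 * sInf Q := Nat.sInf_le h2m
  have hle2 : sInf Q ≤ i0 := Nat.sInf_le ⟨hi0pos, hi0fix⟩
  have hm2 : 2 ≤ sInf Q := by
    rcases Nat.lt_or_ge (sInf Q) 2 with h | h
    · exfalso
      have h1 : sInf Q = 1 := by omega
      rw [h1] at hm0fix
      exact hrho_ne hm0fix
    · exact h
  exact ⟨by omega, by omega⟩
end

section
/- For the middle-levels map f and any x with n or n+1 ones in a length-(2n+1) string: (a) κ(f^i(x)) = κ(x) for all i ≥ 0; (b) the necklaces ⟨x⟩, ⟨f(x)⟩, …, ⟨f^{κ(x)−1}(x)⟩ are pairwise distinct; (c) ⟨f^{κ(x)+i}(x)⟩ = ⟨f^i(x)⟩ for all i ≥ 0. -/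
/-!
The cycle lemma: a word `D 0` with `D` a Dyck word has no other rotation of the same shape, and
likewise for `1 D`. Hence every string `x` of the two middle levels has a canonical rotation
`σ^ℓ(x) x` of this shape, rotation-equivalent strings share it, and since `f x` is a rotation of
`f (σ^ℓ(x) x)`, `f` induces a map on necklaces. On canonical rotations `f` turns `1 u 0 v 0`
into `1 u 1 v 0` and `1 u 1 v 0` into `0 u 1 v 0`; the last-arch decomposition `u 1 v 0` is unique
and `0 w` is a rotation of `w 0`, so by the cycle lemma again the necklace map is injective. An
injection of the finite set of necklaces is a permutation, `κ(x)` is the minimal period of `⟨x⟩`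
under it, and (a)–(c) are the basic properties of minimal periods.
-/

open List Function DyckStep

@[simp]
lemma DyckWord.toList_add (p q : DyckWord) : (p + q).toList = p.toList ++ q.toList := rfl

@[simp]
lemma DyckWord.toList_nest (p : DyckWord) : p.nest.toList = U :: p.toList ++ [D] := rfl

-- Transfers `IsDyck` to Mathlib's `DyckWord`, whose first-return decomposition
-- `p = nest p.insidePart + p.outsidePart` gives the arch decompositions below.
def Bool.toDyckStep (b : Bool) : DyckStep := bif b then U else D

@[simp] lemma Bool.toDyckStep_true : true.toDyckStep = U := rfl

@[simp] lemma Bool.toDyckStep_false : false.toDyckStep = D := rfl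

lemma Bool.toDyckStep_injective : Injective Bool.toDyckStep := by
  intro a b; cases a <;> cases b <;> simp [Bool.toDyckStep]

lemma isDyck_iff_map_toDyckStep {w : List Bool} :
    IsDyck w ↔ (w.map Bool.toDyckStep).count U = (w.map Bool.toDyckStep).count D ∧
      ∀ i, ((w.map Bool.toDyckStep).take i).count D ≤
        ((w.map Bool.toDyckStep).take i).count U := by
  simp only [IsDyck, ← map_take, ← Bool.toDyckStep_true, ← Bool.toDyckStep_false,
    count_map_of_injective _ _ Bool.toDyckStep_injective, eq_comm]

def IsDyck.toDyckWord {w : List Bool} (h : IsDyck w) : DyckWord :=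
  ⟨w.map Bool.toDyckStep, (isDyck_iff_map_toDyckStep.1 h).1, (isDyck_iff_map_toDyckStep.1 h).2⟩

@[simp]
lemma IsDyck.toList_toDyckWord {w : List Bool} (h : IsDyck w) :
    h.toDyckWord.toList = w.map Bool.toDyckStep := rfl

lemma DyckWord.exists_isDyck (p : DyckWord) :
    ∃ w, IsDyck w ∧ w.map Bool.toDyckStep = p.toList := by
  have hw : (p.toList.map (· == U)).map Bool.toDyckStep = p.toList := by
    rw [map_map]
    exact map_id'' (fun s => by cases s <;> rfl) _
  refine ⟨_, isDyck_iff_map_toDyckStep.2 ?_, hw⟩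
  rw [hw]
  exact ⟨p.count_U_eq_count_D, p.count_D_le_count_U⟩

lemma IsDyck.append_true_cons_append_false {u v : List Bool} (hu : IsDyck u) (hv : IsDyck v) :
    IsDyck (u ++ true :: v ++ [false]) := by
  obtain ⟨w, hw, hmap⟩ := (hu.toDyckWord + hv.toDyckWord.nest).exists_isDyck
  convert hw using 1
  refine map_injective_iff.2 Bool.toDyckStep_injective ?_
  simp [hmap]

lemma IsDyck.exists_eq_true_cons_append_false_cons {w : List Bool} (hw : IsDyck w)
    (hne : w ≠ []) : ∃ u v, IsDyck u ∧ IsDyck v ∧ w = true :: u ++ false :: v := by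
  have hp : hw.toDyckWord ≠ 0 := by
    rw [← DyckWord.toList_ne_nil]; simpa using hne
  obtain ⟨u, hu, hmapu⟩ := hw.toDyckWord.insidePart.exists_isDyck
  obtain ⟨v, hv, hmapv⟩ := hw.toDyckWord.outsidePart.exists_isDyck
  refine ⟨u, v, hu, hv, map_injective_iff.2 Bool.toDyckStep_injective ?_⟩
  have := congrArg DyckWord.toList (DyckWord.nest_insidePart_add_outsidePart hp)
  rw [← hw.toList_toDyckWord, ← this]
  simp [hmapu, hmapv]

lemma IsDyck.eq_of_true_cons_append_false_cons_eq {u v u' v' : List Bool}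
    (hu : IsDyck u) (hv : IsDyck v) (hu' : IsDyck u') (hv' : IsDyck v')
    (h : true :: u ++ false :: v = true :: u' ++ false :: v') : u = u' ∧ v = v' := by
  have hsum : hu.toDyckWord.nest + hv.toDyckWord = hu'.toDyckWord.nest + hv'.toDyckWord := by
    ext1
    simpa using congrArg (map Bool.toDyckStep) h
  have hin := congrArg DyckWord.insidePart hsum
  simp only [DyckWord.insidePart_add DyckWord.nest_ne_zero, DyckWord.insidePart_nest] at hin
  have hu : u = u' :=
    map_injective_iff.2 Bool.toDyckStep_injective (by simpa using congrArg DyckWord.toList hin)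
  subst hu
  simpa using h

def List.dual (w : List Bool) : List Bool := (w.map not).reverse

@[simp]
lemma List.dual_append (a b : List Bool) : (a ++ b).dual = b.dual ++ a.dual := by
  simp [List.dual]

@[simp]
lemma List.dual_cons (b : Bool) (w : List Bool) : (b :: w).dual = w.dual ++ [!b] := by
  simp [List.dual]

lemma List.dual_involutive : Involutive List.dual := by
  intro w; simp [List.dual, Function.comp_def]

@[simp]
lemma List.count_dual (w : List Bool) (b : Bool) : w.dual.count b = w.count (!b) := by
  rw [List.dual, count_reverse, ← count_map_of_injective w not Bool.not_injective, Bool.not_not]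

lemma List.IsRotated.dual {l l' : List Bool} (h : l ~r l') : l.dual ~r l'.dual :=
  (h.map not).reverse

lemma IsDyck.two_mul_count_true {w : List Bool} (hw : IsDyck w) :
    2 * w.count true = w.length := by
  have := count_true_add_count_false w
  have := hw.1
  omega

lemma IsDyck.count_true_drop_le {w : List Bool} (hw : IsDyck w) (j : ℕ) :
    (w.drop j).count true ≤ (w.drop j).count false := by
  have hsplit (b : Bool) : (w.take j).count b + (w.drop j).count b = w.count b := by
    rw [← count_append, take_append_drop]
  have := hw.2 j
  have := hsplit true
  have := hsplit false
  have := hw.1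
  omega

lemma IsDyck.dual {w : List Bool} (hw : IsDyck w) : IsDyck w.dual := by
  refine ⟨by simpa using hw.1.symm, fun k => ?_⟩
  have htake : w.dual.take k = (w.drop (w.length - k)).dual := by
    simp [List.dual, take_reverse, map_drop]
  simpa [htake] using hw.count_true_drop_le (w.length - k)

lemma IsDyck.exists_eq_append_true_cons_append_false {w : List Bool} (hw : IsDyck w)
    (hne : w ≠ []) : ∃ u v, IsDyck u ∧ IsDyck v ∧ w = u ++ true :: v ++ [false] := by
  obtain ⟨u, v, hu, hv, h⟩ :=
    hw.dual.exists_eq_true_cons_append_false_cons (by simpa [List.dual] using hne)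
  refine ⟨v.dual, u.dual, hv.dual, hu.dual, ?_⟩
  rw [← List.dual_involutive w, h]
  simp

lemma IsDyck.eq_of_append_true_cons_append_false_eq {u v u' v' : List Bool}
    (hu : IsDyck u) (hv : IsDyck v) (hu' : IsDyck u') (hv' : IsDyck v')
    (h : u ++ true :: v ++ [false] = u' ++ true :: v' ++ [false]) : u = u' ∧ v = v' := by
  have := eq_of_true_cons_append_false_cons_eq hv.dual hu.dual hv'.dual hu'.dual
    (by simpa using congrArg List.dual h)
  exact ⟨List.dual_involutive.injective this.2, List.dual_involutive.injective this.1⟩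

lemma IsDyck.eq_of_isRotated_append_false {w w' : List Bool} (hw : IsDyck w) (hw' : IsDyck w')
    (h : w ++ [false] ~r w' ++ [false]) : w = w' := by
  obtain ⟨k, hk, hrot⟩ := isRotated_iff_mod.1 h
  have hlen : w'.length = w.length := by simpa using (congrArg length hrot).symm
  simp only [length_append, length_singleton] at hk
  rcases Nat.eq_zero_or_pos k with rfl | hk0
  · simpa using hrot
  rcases hk.eq_or_lt with rfl | hklt
  · rw [show w.length + 1 = (w ++ [false]).length by simp, rotate_length] at hrot
    simpa using hrot
  rw [rotate_eq_drop_append_take (by simp; omega), drop_append_of_le_length (by omega)] at hrot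
  have hprefix : w'.take (w.length + 1 - k) = w.drop k ++ [false] := by
    rw [← take_append_of_le_length (l₂ := [false]) (by omega), ← hrot,
      take_left' (by simp; omega)]
  -- `w.drop k ++ [false]` has more 0s than 1s, as `w.take k` has no more 0s than 1s.
  have hbalance := hw'.2 (w.length + 1 - k)
  rw [hprefix] at hbalance
  have := hw.count_true_drop_le k
  simp only [count_cons, count_append, count_nil, beq_iff_eq, Bool.false_eq_true, reduceIte]
    at hbalance
  omega

lemma IsDyck.eq_of_isRotated_true_cons {w w' : List Bool} (hw : IsDyck w) (hw' : IsDyck w')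
    (h : true :: w ~r true :: w') : w = w' :=
  List.dual_involutive.injective
    (hw.dual.eq_of_isRotated_append_false hw'.dual (by simpa using h.dual))

namespace MiddleLevels

def middleLevels (n : ℕ) : Set (List Bool) :=
  {x | x.length = 2 * n + 1 ∧ (x.count true = n ∨ x.count true = n + 1)}

instance (n : ℕ) : Finite (middleLevels n) :=
  ((List.finite_length_eq Bool (2 * n + 1)).subset fun _ hx => hx.1).to_subtype

abbrev Necklace (n : ℕ) : Type :=
  Quotient ((IsRotated.setoid Bool).comap ((↑) : middleLevels n → List Bool))

def necklace {n : ℕ} {x : List Bool} (hx : x ∈ middleLevels n) : Necklace n :=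
  Quotient.mk _ ⟨x, hx⟩

lemma necklace_eq_necklace_iff {n : ℕ} {x y : List Bool} (hx : x ∈ middleLevels n)
    (hy : y ∈ middleLevels n) : necklace hx = necklace hy ↔ x ~r y :=
  Quotient.eq

structure IsMiddleLevelsMap (n : ℕ) (f : List Bool → List Bool) (ell : List Bool → ℕ) :
    Prop where
  one_le : 1 ≤ n
  map_true_cons_append_false_cons : ∀ u v, IsDyck u → IsDyck v →
    f (true :: u ++ false :: v ++ [false]) = true :: u ++ true :: v ++ [false]
  map_true_cons_append_true_cons : ∀ u v, IsDyck u → IsDyck v →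
    f (true :: u ++ true :: v ++ [false]) = false :: u ++ true :: v ++ [false]
  isDyck_take_rotate_ell : ∀ x : List Bool, x.length = 2 * n + 1 → x.count true = n →
    IsDyck ((x.rotate (ell x)).take (2 * n))
  isDyck_drop_rotate_ell : ∀ x : List Bool, x.length = 2 * n + 1 → x.count true = n + 1 →
    IsDyck ((x.rotate (ell x)).drop 1)
  map_eq_rotate : ∀ x ∈ middleLevels n, f x = (f (x.rotate (ell x))).rotate (2 * n + 1 - ell x)

namespace IsMiddleLevelsMap

variable {n : ℕ} {f : List Bool → List Bool} {ell : List Bool → ℕ} {x y : List Bool}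

lemma map_rotate_ell_isRotated (hf : IsMiddleLevelsMap n f ell) (hx : x ∈ middleLevels n) :
    f (x.rotate (ell x)) ~r f x :=
  ⟨_, (hf.map_eq_rotate x hx).symm⟩

lemma rotate_ell_eq_append_false (hf : IsMiddleLevelsMap n f ell)
    (hx : x.length = 2 * n + 1) (hc : x.count true = n) :
    ∃ w, IsDyck w ∧ w ≠ [] ∧ x.rotate (ell x) = w ++ [false] := by
  obtain ⟨w, b, hwb⟩ : ∃ w b, x.rotate (ell x) = w ++ [b] :=
    (eq_nil_or_concat' _).resolve_left (by simp [← length_eq_zero_iff, hx])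
  have hlen : w.length = 2 * n := by simpa [hx] using (congrArg length hwb).symm
  have hw : IsDyck w := by simpa [hwb, take_left' hlen] using hf.isDyck_take_rotate_ell x hx hc
  have hcount : (w ++ [b]).count true = n := by rw [← hwb, (rotate_perm _ _).count_eq, hc]
  have := hw.two_mul_count_true
  have := hf.one_le
  refine ⟨w, hw, by simp [← length_eq_zero_iff]; omega, ?_⟩
  cases b
  · exact hwb
  · simp only [count_cons, count_append, count_nil, beq_iff_eq, reduceIte] at hcount
    omega

lemma rotate_ell_eq_true_cons (hf : IsMiddleLevelsMap n f ell)
    (hx : x.length = 2 * n + 1) (hc : x.count true = n + 1) :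
    ∃ w, IsDyck w ∧ w ≠ [] ∧ x.rotate (ell x) = true :: w := by
  obtain ⟨b, w, hbw⟩ : ∃ b w, x.rotate (ell x) = b :: w :=
    exists_cons_of_ne_nil (by simp [← length_eq_zero_iff, hx])
  have hlen : w.length = 2 * n := by simpa [hx] using (congrArg length hbw).symm
  have hw : IsDyck w := by simpa [hbw] using hf.isDyck_drop_rotate_ell x hx hc
  have hcount : (b :: w).count true = n + 1 := by rw [← hbw, (rotate_perm _ _).count_eq, hc]
  have := hw.two_mul_count_true
  have := hf.one_le
  refine ⟨w, hw, by simp [← length_eq_zero_iff]; omega, ?_⟩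
  cases b
  · simp only [count_cons, beq_iff_eq, Bool.false_eq_true, reduceIte] at hcount
    omega
  · exact hbw

lemma map_rotate_ell_of_count_eq (hf : IsMiddleLevelsMap n f ell)
    (hx : x.length = 2 * n + 1) (hc : x.count true = n) :
    ∃ u v, IsDyck u ∧ IsDyck v ∧ x.rotate (ell x) = true :: u ++ false :: v ++ [false] ∧
      f (x.rotate (ell x)) = true :: (u ++ true :: v ++ [false]) := by
  obtain ⟨w, hw, hne, hxw⟩ := hf.rotate_ell_eq_append_false hx hc
  obtain ⟨u, v, hu, hv, rfl⟩ := hw.exists_eq_true_cons_append_false_cons hne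
  refine ⟨u, v, hu, hv, hxw, ?_⟩
  rw [hxw, hf.map_true_cons_append_false_cons u v hu hv]
  simp

lemma map_rotate_ell_of_count_eq_succ (hf : IsMiddleLevelsMap n f ell)
    (hx : x.length = 2 * n + 1) (hc : x.count true = n + 1) :
    ∃ u v, IsDyck u ∧ IsDyck v ∧ x.rotate (ell x) = true :: (u ++ true :: v ++ [false]) ∧
      f (x.rotate (ell x)) = false :: (u ++ true :: v ++ [false]) := by
  obtain ⟨w, hw, hne, hxw⟩ := hf.rotate_ell_eq_true_cons hx hc
  obtain ⟨u, v, hu, hv, rfl⟩ := hw.exists_eq_append_true_cons_append_false hne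
  refine ⟨u, v, hu, hv, hxw, ?_⟩
  rw [hxw, ← cons_append, ← cons_append, hf.map_true_cons_append_true_cons u v hu hv]
  simp

lemma length_map_and_count_true_map_add (hf : IsMiddleLevelsMap n f ell)
    (hx : x ∈ middleLevels n) :
    (f x).length = x.length ∧ (f x).count true + x.count true = x.length := by
  have hfx := (hf.map_rotate_ell_isRotated hx).perm
  have hx' := (rotate_perm x (ell x))
  rw [← hfx.length_eq, ← hfx.count_eq, ← hx'.length_eq, ← hx'.count_eq]
  rcases hx.2.imp (hf.map_rotate_ell_of_count_eq hx.1) (hf.map_rotate_ell_of_count_eq_succ hx.1)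
    with ⟨u, v, hu, hv, hxc, hfc⟩ | ⟨u, v, hu, hv, hxc, hfc⟩ <;>
  · rw [hfc, hxc]
    have := hu.two_mul_count_true
    have := hv.two_mul_count_true
    simp only [length_cons, length_append, length_nil, count_cons, count_append, count_nil,
      beq_iff_eq, Bool.false_eq_true, reduceIte, true_and]
    omega

lemma mapsTo (hf : IsMiddleLevelsMap n f ell) :
    Set.MapsTo f (middleLevels n) (middleLevels n) := by
  intro x hx
  obtain ⟨hlen, hcount⟩ := hf.length_map_and_count_true_map_add hx
  refine ⟨hlen.trans hx.1, ?_⟩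
  rcases hx with ⟨hx, hc | hc⟩ <;> omega

lemma rotate_ell_eq_of_isRotated (hf : IsMiddleLevelsMap n f ell) (hx : x ∈ middleLevels n)
    (h : x ~r y) : x.rotate (ell x) = y.rotate (ell y) := by
  have hc : x.rotate (ell x) ~r y.rotate (ell y) :=
    (IsRotated.forall x _).trans (h.trans (IsRotated.forall y _).symm)
  have hy : y.length = 2 * n + 1 := h.perm.length_eq ▸ hx.1
  rcases hx with ⟨hx, hcx | hcx⟩
  · obtain ⟨w, hw, -, hxw⟩ := hf.rotate_ell_eq_append_false hx hcx
    obtain ⟨w', hw', -, hyw⟩ := hf.rotate_ell_eq_append_false hy (h.perm.count_eq true ▸ hcx)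
    rw [hxw, hyw] at hc ⊢
    rw [hw.eq_of_isRotated_append_false hw' hc]
  · obtain ⟨w, hw, -, hxw⟩ := hf.rotate_ell_eq_true_cons hx hcx
    obtain ⟨w', hw', -, hyw⟩ := hf.rotate_ell_eq_true_cons hy (h.perm.count_eq true ▸ hcx)
    rw [hxw, hyw] at hc ⊢
    rw [hw.eq_of_isRotated_true_cons hw' hc]

lemma rotate_ell_eq_of_map_isRotated (hf : IsMiddleLevelsMap n f ell) (hx : x ∈ middleLevels n)
    (hy : y.length = 2 * n + 1) (hxy : y.count true = x.count true)
    (h : f (x.rotate (ell x)) ~r f (y.rotate (ell y))) : x.rotate (ell x) = y.rotate (ell y) := by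
  rcases hx with ⟨hx, hcx | hcx⟩
  · obtain ⟨u, v, hu, hv, hxc, hfx⟩ := hf.map_rotate_ell_of_count_eq hx hcx
    obtain ⟨u', v', hu', hv', hyc, hfy⟩ := hf.map_rotate_ell_of_count_eq hy (hxy.trans hcx)
    rw [hfx, hfy] at h
    obtain ⟨rfl, rfl⟩ := IsDyck.eq_of_append_true_cons_append_false_eq hu hv hu' hv'
      ((hu.append_true_cons_append_false hv).eq_of_isRotated_true_cons
        (hu'.append_true_cons_append_false hv') h)
    rw [hxc, hyc]
  · obtain ⟨u, v, hu, hv, hxc, hfx⟩ := hf.map_rotate_ell_of_count_eq_succ hx hcx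
    obtain ⟨u', v', hu', hv', hyc, hfy⟩ := hf.map_rotate_ell_of_count_eq_succ hy (hxy.trans hcx)
    rw [hfx, hfy] at h
    obtain ⟨rfl, rfl⟩ := IsDyck.eq_of_append_true_cons_append_false_eq hu hv hu' hv'
      ((hu.append_true_cons_append_false hv).eq_of_isRotated_append_false
        (hu'.append_true_cons_append_false hv')
        (IsRotated.cons_append_singleton.symm.trans (h.trans IsRotated.cons_append_singleton)))
    rw [hxc, hyc]

lemma map_isRotated_map (hf : IsMiddleLevelsMap n f ell) (hx : x ∈ middleLevels n)
    (h : x ~r y) : f x ~r f y := by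
  have hy : y ∈ middleLevels n := ⟨h.perm.length_eq ▸ hx.1, h.perm.count_eq true ▸ hx.2⟩
  exact (hf.map_rotate_ell_isRotated hx).symm.trans
    (hf.rotate_ell_eq_of_isRotated hx h ▸ hf.map_rotate_ell_isRotated hy)

lemma isRotated_of_map_isRotated (hf : IsMiddleLevelsMap n f ell) (hx : x ∈ middleLevels n)
    (hy : y ∈ middleLevels n) (h : f x ~r f y) : x ~r y := by
  have hcount : y.count true = x.count true := by
    have hfx := hf.length_map_and_count_true_map_add hx
    have hfy := hf.length_map_and_count_true_map_add hy
    have := h.perm.count_eq true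
    have := hx.1
    have := hy.1
    omega
  have hc := hf.rotate_ell_eq_of_map_isRotated hx hy.1 hcount
    ((hf.map_rotate_ell_isRotated hx).trans (h.trans (hf.map_rotate_ell_isRotated hy).symm))
  exact (IsRotated.forall x _).symm.trans (hc ▸ IsRotated.forall y _)

def necklaceMap (hf : IsMiddleLevelsMap n f ell) : Necklace n → Necklace n :=
  Quotient.map (hf.mapsTo.restrict f _ _) fun x _ h => hf.map_isRotated_map x.2 h

lemma necklaceMap_injective (hf : IsMiddleLevelsMap n f ell) : Injective hf.necklaceMap := by
  rintro ⟨x⟩ ⟨y⟩ h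
  exact Quotient.sound (hf.isRotated_of_map_isRotated x.2 y.2 (Quotient.exact h))

lemma necklaceMap_iterate_necklace (hf : IsMiddleLevelsMap n f ell) (hx : x ∈ middleLevels n)
    (k : ℕ) : hf.necklaceMap^[k] (necklace hx) = necklace (hf.mapsTo.iterate k hx) := by
  induction k with
  | zero => rfl
  | succ k ih =>
    rw [iterate_succ_apply', ih]
    exact congrArg (Quotient.mk _) (Subtype.ext (iterate_succ_apply' f k x).symm)

lemma necklaceMap_iterate_eq_iff (hf : IsMiddleLevelsMap n f ell) (hx : x ∈ middleLevels n)
    (i j : ℕ) : hf.necklaceMap^[j] (necklace hx) = hf.necklaceMap^[i] (necklace hx) ↔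
      ∃ r, f^[j] x = (f^[i] x).rotate r := by
  rw [necklaceMap_iterate_necklace, necklaceMap_iterate_necklace, eq_comm,
    necklace_eq_necklace_iff]
  exact exists_congr fun r => eq_comm

lemma sInf_eq_minimalPeriod (hf : IsMiddleLevelsMap n f ell) (hx : x ∈ middleLevels n) :
    sInf {k | 0 < k ∧ ∃ r, f^[k] x = x.rotate r} =
      minimalPeriod hf.necklaceMap (necklace hx) := by
  rw [minimalPeriod_eq_sInf_n_pos_IsPeriodicPt]
  congr! 4 with k
  exact (hf.necklaceMap_iterate_eq_iff hx 0 k).symm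

end IsMiddleLevelsMap

end MiddleLevels

open MiddleLevels

/-- Let `f` be the middle-levels map on strings of length `2n+1` with `n`
or `n+1` ones, defined by `f(1 u 0 v 0) = 1 u 1 v 0` and `f(1 u 1 v 0) = 0 u 1 v 0` for
Dyck words `u, v`, extended by conjugation with the canonical cyclic rotation `ℓ`:
`f(x) = σ^{−ℓ(x)}(f(σ^{ℓ(x)}(x)))`.  With `κ(z) := min{ i > 0 : ⟨f^i(z)⟩ = ⟨z⟩ }` (necklace
= set of cyclic rotations):
(a) `κ(f^i(x)) = κ(x)` for all `i ≥ 0`;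
(b) the necklaces `⟨f^i(x)⟩`, `0 ≤ i < κ(x)`, are pairwise distinct;
(c) `⟨f^{κ(x)+i}(x)⟩ = ⟨f^i(x)⟩` for all `i ≥ 0`. -/
theorem kappa_properties (n : ℕ) (hn : 1 ≤ n)
    (f : List Bool → List Bool) (ell : List Bool → ℕ)
    (hf1 : ∀ u v : List Bool, IsDyck u → IsDyck v →
      f (true :: u ++ false :: v ++ [false]) = true :: u ++ true :: v ++ [false])
    (hf2 : ∀ u v : List Bool, IsDyck u → IsDyck v →
      f (true :: u ++ true :: v ++ [false]) = false :: u ++ true :: v ++ [false])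
    (hellA : ∀ x : List Bool, x.length = 2 * n + 1 → x.count true = n →
      ell x ≤ 2 * n ∧ IsDyck ((x.rotate (ell x)).take (2 * n)))
    (hellB : ∀ y : List Bool, y.length = 2 * n + 1 → y.count true = n + 1 →
      ell y ≤ 2 * n ∧ IsDyck ((y.rotate (ell y)).drop 1))
    (hf3 : ∀ x : List Bool, x.length = 2 * n + 1 →
      (x.count true = n ∨ x.count true = n + 1) →
      f x = (f (x.rotate (ell x))).rotate (2 * n + 1 - ell x))
    (x : List Bool) (hx : x.length = 2 * n + 1)
    (hc : x.count true = n ∨ x.count true = n + 1) :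
    (∀ i : ℕ, sInf {k | 0 < k ∧ ∃ r : ℕ, f^[k] (f^[i] x) = (f^[i] x).rotate r}
        = sInf {k | 0 < k ∧ ∃ r : ℕ, f^[k] x = x.rotate r}) ∧
    (∀ i j : ℕ, i < j → j < sInf {k | 0 < k ∧ ∃ r : ℕ, f^[k] x = x.rotate r} →
      ¬ ∃ r : ℕ, f^[j] x = (f^[i] x).rotate r) ∧
    (∀ i : ℕ, ∃ r : ℕ,
      f^[sInf {k | 0 < k ∧ ∃ r : ℕ, f^[k] x = x.rotate r} + i] x = (f^[i] x).rotate r) := by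
  have hf : IsMiddleLevelsMap n f ell :=
    ⟨hn, hf1, hf2, fun x hx hc => (hellA x hx hc).2, fun y hy hc => (hellB y hy hc).2,
      fun x hx => hf3 x hx.1 hx.2⟩
  have hx : x ∈ middleLevels n := ⟨hx, hc⟩
  have hper := hf.necklaceMap_injective.mem_periodicPts (necklace hx)
  rw [hf.sInf_eq_minimalPeriod hx]
  refine ⟨fun i => ?_, fun i j hij hj hr => ?_, fun i => ?_⟩
  · rw [hf.sInf_eq_minimalPeriod (hf.mapsTo.iterate i hx), ← hf.necklaceMap_iterate_necklace hx,
      minimalPeriod_apply_iterate hper]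
  · exact hij.ne' (iterate_injOn_Iio_minimalPeriod hj (hij.trans hj)
      ((hf.necklaceMap_iterate_eq_iff hx i j).2 hr))
  · rw [← hf.necklaceMap_iterate_eq_iff, add_comm, iterate_add_minimalPeriod_eq]
end
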